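/- arXiv:math/0002063 — 3 statements merged into one kernel-verified Lean document; each statement's English description precedes it below -/
import Mathlib

section
/- For natural numbers m, n with m ≤ n and any nonzero complex number r, the terminating hypergeometric sum ₂F₀(-m, -n; -1/r²) satisfies ₂F₀(-m, -n; -1/r²) = (n! / (n-m)!) · (-1/r²)^m · Φ(-m, 1+(n-m); r²). -/
/-- Terminating hypergeometric sum ₂F₀(-m, -n; c)
    = Σ_{j=0}^{min(m,n)} (choose m j)(choose n j) j! c^j. -/
noncomputable def twoFzero (m n : ℕ) (c : ℂ) : ℂ :=
  ∑ j ∈ Finset.range (min m n + 1),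
    (m.choose j : ℂ) * (n.choose j : ℂ) * (Nat.factorial j : ℂ) * c ^ j

/-- Terminating Kummer function Φ(-p, 1+k; x)
    = Σ_{j=0}^{p} (-1)^j (choose p j) x^j / (k+1)_j. -/
noncomputable def kummerPhi (p k : ℕ) (x : ℂ) : ℂ :=
  ∑ j ∈ Finset.range (p + 1),
    (-1 : ℂ) ^ j * (p.choose j : ℂ) * x ^ j / ((ascPochhammer ℂ j).eval ((k : ℂ) + 1))

theorem twoFzero_eq_kummer_of_le (m n : ℕ) (hmn : m ≤ n) (r : ℂ) (hr : r ≠ 0) :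
    twoFzero m n (-1 / r ^ 2) =
      ((Nat.factorial n : ℂ) / (Nat.factorial (n - m) : ℂ)) * (-1 / r ^ 2) ^ m *
        kummerPhi m (n - m) (r ^ 2) := by
  have hr2 : (r : ℂ) ^ 2 ≠ 0 := pow_ne_zero 2 hr
  have hmin : min m n = m := min_eq_left hmn
  rw [twoFzero, kummerPhi, hmin, Finset.mul_sum, ← Finset.sum_range_reflect]
  refine Finset.sum_congr rfl fun j hj => ?_
  have hjm : j ≤ m := Nat.lt_succ_iff.mp (Finset.mem_range.mp hj)
  have h1 : m + 1 - 1 - j = m - j := by omega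
  rw [h1]
  -- Pochhammer value as a natural factorial quotient
  have hP : (ascPochhammer ℂ j).eval (((n - m : ℕ) : ℂ) + 1) =
      (((n - m + 1).ascFactorial j : ℕ) : ℂ) := by
    rw [Nat.cast_ascFactorial]
    push_cast
    ring_nf
  have hPne : (((n - m + 1).ascFactorial j : ℕ) : ℂ) ≠ 0 := by
    exact_mod_cast Nat.cast_ne_zero.mpr (Nat.ascFactorial_pos (n - m) j).ne'
  -- key ℕ identities
  have hkey : n.choose (m - j) * (m - j).factorial * (n - m + j).factorial = n.factorial := by
    have h2 : n - (m - j) = n - m + j := by omega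
    have := Nat.choose_mul_factorial_mul_factorial (show m - j ≤ n by omega)
    rwa [h2] at this
  have hasc : (n - m).factorial * (n - m + 1).ascFactorial j = (n - m + j).factorial :=
    Nat.factorial_mul_ascFactorial (n - m) j
  have hsym : m.choose (m - j) = m.choose j := Nat.choose_symm hjm
  -- power manipulation: c^m * (r²)^j = c^(m-j) * (-1)^j  with c = -1/r²
  have hpow : (-1 / r ^ 2) ^ m * (r ^ 2) ^ j = (-1 / r ^ 2) ^ (m - j) * (-1) ^ j := by
    have hm : m = (m - j) + j := by omega
    rw [hm, pow_add, mul_assoc, ← mul_pow]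
    congr 2
    · omega
    · exact div_mul_cancel₀ (-1) hr2
  rw [hP, hsym]
  have hfne : ((n - m).factorial : ℂ) ≠ 0 := Nat.cast_ne_zero.mpr (Nat.factorial_ne_zero _)
  have hkeyC : (n.choose (m - j) : ℂ) * ((m - j).factorial : ℂ) * ((n - m + j).factorial : ℂ)
      = (n.factorial : ℂ) := by exact_mod_cast congrArg (Nat.cast (R := ℂ)) hkey
  have hascC : ((n - m).factorial : ℂ) * (((n - m + 1).ascFactorial j : ℕ) : ℂ)
      = ((n - m + j).factorial : ℂ) := by exact_mod_cast congrArg (Nat.cast (R := ℂ)) hasc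
  have hne : ((n - m + j).factorial : ℂ) ≠ 0 := Nat.cast_ne_zero.mpr (Nat.factorial_ne_zero _)
  obtain ⟨k, rfl⟩ : ∃ k, m = k + j := ⟨m - j, by omega⟩
  simp only [Nat.add_sub_cancel] at *
  field_simp
  have h2 : ((-1 : ℂ)) ^ (j * 2) = 1 := by rw [mul_comm, pow_mul]; norm_num
  linear_combination (((k + j).choose j : ℂ) * (n.choose k : ℂ) * (k.factorial : ℂ) * (-1 / r ^ 2) ^ k) * hascC +
    (((k + j).choose j : ℂ) * (-1 / r ^ 2) ^ k) * hkeyC -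
    (((k + j).choose j : ℂ) * (n.factorial : ℂ) * (-1 : ℂ) ^ j) * hpow -
    (((k + j).choose j : ℂ) * (n.factorial : ℂ) * (-1 / r ^ 2) ^ k) * h2
end

section
/- For natural numbers m, n with n ≤ m and any nonzero complex number r, the terminating hypergeometric sum ₂F₀(-m, -n; -1/r²) satisfies ₂F₀(-m, -n; -1/r²) = (m! / (m-n)!) · (-1/r²)^n · Φ(-n, 1+(m-n); r²). -/
theorem twoFzero_eq_kummer_of_ge (m n : ℕ) (hnm : n ≤ m) (r : ℂ) (hr : r ≠ 0) :
    twoFzero m n (-1 / r ^ 2) =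
      ((Nat.factorial m : ℂ) / (Nat.factorial (m - n) : ℂ)) * (-1 / r ^ 2) ^ n *
        kummerPhi n (m - n) (r ^ 2) := by
  have hr2 : (r : ℂ) ^ 2 ≠ 0 := pow_ne_zero _ hr
  unfold twoFzero kummerPhi
  rw [min_eq_right hnm, Finset.mul_sum]
  conv_rhs => rw [← Finset.sum_range_reflect]
  refine Finset.sum_congr rfl fun i hi => ?_
  have hin : i ≤ n := Nat.lt_succ_iff.mp (Finset.mem_range.mp hi)
  have him : i ≤ m := hin.trans hnm
  have h1 : n + 1 - 1 - i = n - i := by omega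
  rw [h1, Nat.choose_symm hin]
  have hP : ((m - n).factorial : ℂ) *
      (ascPochhammer ℂ (n - i)).eval (((m - n : ℕ) : ℂ) + 1) = ((m - i).factorial : ℂ) := by
    have h := factorial_mul_ascPochhammer ℂ (m - n) (n - i)
    rwa [show m - n + (n - i) = m - i by omega] at h
  have hPne : (ascPochhammer ℂ (n - i)).eval (((m - n : ℕ) : ℂ) + 1) ≠ 0 := by
    intro h
    rw [h, mul_zero] at hP
    exact (Nat.cast_ne_zero.mpr (m - i).factorial_ne_zero) hP.symm
  have hC : (m.choose i : ℂ) * (i.factorial : ℂ) * ((m - i).factorial : ℂ) = (m.factorial : ℂ) := by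
    exact_mod_cast congrArg (Nat.cast : ℕ → ℂ) (Nat.choose_mul_factorial_mul_factorial him)
  have hc : (-1 / r ^ 2 : ℂ) ^ n = (-1 / r ^ 2) ^ i * (-1 / r ^ 2) ^ (n - i) := by
    rw [← pow_add]; congr 1; omega
  have hcanc : ((-1 : ℂ) / r ^ 2) ^ (n - i) * (-1 : ℂ) ^ (n - i) * (r ^ 2) ^ (n - i) = 1 := by
    rw [← mul_pow, ← mul_pow]
    rw [show (-1 : ℂ) / r ^ 2 * (-1) * r ^ 2 = 1 by field_simp]
    exact one_pow _
  have hfn : ((m - n).factorial : ℂ) ≠ 0 := Nat.cast_ne_zero.mpr (m - n).factorial_ne_zero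
  rw [hc]
  field_simp
  rw [Nat.cast_sub hnm] at hP hPne
  have hsq : ((-1 : ℂ)) ^ (n - i) * (-1 : ℂ) ^ (n - i) = 1 := by
    rw [← mul_pow]; norm_num
  have hX : (-(1 / r ^ 2) : ℂ) ^ (n - i) * (-1 : ℂ) ^ (n - i) * (r ^ 2) ^ (n - i) = 1 := by
    linear_combination hcanc
  rw [Nat.cast_sub hnm]
  linear_combination ((m.choose i : ℂ) * (n.choose i : ℂ) * (i.factorial : ℂ)) * hP +
    (n.choose i : ℂ) * hC - ((n.choose i : ℂ) * (m.factorial : ℂ)) * hX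
end

section
/- Let r ≥ 0 be a real number and φ, ψ real numbers, and define the sequence v : ℕ → ℂ by v_n = e^{-r²/2} (-r e^{i(ψ-φ)})^n / √(n!). Then v belongs to ℓ²(ℕ, ℂ) with ‖v‖ = 1, and for every natural number n one has e^{iφ} √(n+1) v_{n+1} + r e^{iψ} v_n = 0; that is, the vector v is a unit vector annihilated coordinatewise by the transformed lowering operator gz = e^{iφ} z + r e^{iψ}, where z acts on sequences by (z w)_n = √(n+1) w_{n+1}. -/
theorem coherent_state_unit_and_annihilated (r φ ψ : ℝ) (hr : 0 ≤ r) (v : ℕ → ℂ)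
    (hv : ∀ n : ℕ, v n =
      Real.exp (-r ^ 2 / 2) *
        (-(r : ℂ) * Complex.exp (Complex.I * ((ψ : ℂ) - (φ : ℂ)))) ^ n /
          Real.sqrt (Nat.factorial n)) :
    Memℓp v 2 ∧ HasSum (fun n : ℕ => ‖v n‖ ^ 2) 1 ∧
      ∀ n : ℕ,
        Complex.exp (Complex.I * (φ : ℂ)) * Real.sqrt (n + 1) * v (n + 1) +
          (r : ℂ) * Complex.exp (Complex.I * (ψ : ℂ)) * v n = 0 := by
  have habs : ∀ n : ℕ, ‖v n‖ ^ 2 = Real.exp (-r ^ 2) * ((r ^ 2) ^ n / n.factorial) := by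
    intro n
    rw [hv n]
    have h1 : ‖Complex.exp (Complex.I * ((ψ : ℂ) - (φ : ℂ)))‖ = 1 := by
      rw [Complex.norm_exp]
      have : (Complex.I * ((ψ : ℂ) - (φ : ℂ))).re = 0 := by simp [Complex.mul_re]
      rw [this, Real.exp_zero]
    have hfac : (0:ℝ) < Real.sqrt n.factorial := Real.sqrt_pos.2 (by positivity)
    rw [norm_div, norm_mul, norm_pow, norm_mul, h1]
    simp only [norm_neg, Complex.norm_real, Real.norm_eq_abs, abs_of_nonneg hr, mul_one,
      abs_of_pos (Real.exp_pos _), abs_of_nonneg (Real.sqrt_nonneg _)]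
    have e1 : Real.exp (-r ^ 2 / 2) ^ 2 = Real.exp (-r ^ 2) := by
      rw [sq, ← Real.exp_add]; ring_nf
    have e2 : (r ^ n) ^ 2 = (r ^ 2) ^ n := by
      rw [← pow_mul, ← pow_mul, Nat.mul_comm]
    rw [div_pow, mul_pow, Real.sq_sqrt (by positivity), e1, e2]; ring
  have hsum : HasSum (fun n : ℕ => ‖v n‖ ^ 2) 1 := by
    have h := (NormedSpace.expSeries_div_hasSum_exp (r ^ 2)).mul_left (Real.exp (-r ^ 2))
    rw [← Real.exp_eq_exp_ℝ] at h
    have : Real.exp (-r ^ 2) * Real.exp (r ^ 2) = 1 := by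
      rw [← Real.exp_add]; simp
    rw [this] at h
    rw [funext habs]
    exact h
  refine ⟨?_, hsum, ?_⟩
  · apply memℓp_gen
    have : (2 : ENNReal).toReal = 2 := by norm_num
    rw [this]
    convert hsum.summable using 2 with n
    rw [← Real.rpow_natCast ‖v n‖ 2]
    norm_num
  · intro n
    have h1 : (Real.sqrt ((n + 1).factorial) : ℝ) =
        Real.sqrt (n + 1) * Real.sqrt n.factorial := by
      rw [Nat.factorial_succ, Nat.cast_mul, Real.sqrt_mul (by positivity)]
      norm_num
    have hfac : (Real.sqrt n.factorial : ℂ) ≠ 0 := by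
      simp [Real.sqrt_eq_zero', Nat.factorial_pos n, Nat.cast_pos.2 (Nat.factorial_pos n)]
      positivity
    have hsq : (Real.sqrt (n + 1) : ℂ) ≠ 0 := by
      have : (0:ℝ) < Real.sqrt (n+1) := Real.sqrt_pos.2 (by positivity)
      exact_mod_cast this.ne'
    have hexp : Complex.exp (Complex.I * (φ : ℂ)) *
        Complex.exp (Complex.I * ((ψ : ℂ) - (φ : ℂ))) =
        Complex.exp (Complex.I * (ψ : ℂ)) := by
      rw [← Complex.exp_add]; ring_nf
    rw [hv n, hv (n + 1)]
    push_cast [h1]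
    rw [pow_succ]
    field_simp
    ring_nf
    have hexp2 : Complex.exp (Complex.I * (φ : ℂ)) *
        Complex.exp (-(Complex.I * (φ : ℂ)) + Complex.I * (ψ : ℂ)) =
        Complex.exp (Complex.I * (ψ : ℂ)) := by
      rw [← Complex.exp_add]; ring_nf
    rw [← hexp2]
    ring
end
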